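/- Let E, H and K be Hilbert 𝔄-modules, and let T ∈ L(E, K) and T′ ∈ L(H, K) be such that T′(T′)* ≤ λ₀ TT* for some λ₀ > 0. Then inf{λ > 0 : T′(T′)* ≤ λ TT*} = sup{‖(T′)*z‖² : z ∈ K, ‖T*z‖ ≤ 1}. -/

import Mathlib

open scoped RightActions
/-- The `CStarModule` class as it stood in the older Mathlib (right `A`-modules, with
`⟪x, y <• a⟫ = ⟪x, y⟫ * a`); Mathlib's `CStarModule` is now a left-module notion. -/
class CStarModuleRight (A E : Type*) [NonUnitalSemiring A] [StarRing A] [Module ℂ A]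
    [AddCommGroup E] [Module ℂ E] [PartialOrder A] [SMul Aᵐᵒᵖ E] [Norm A] [Norm E]
    extends Inner A E where
  inner_add_right {x} {y} {z} : inner x (y + z) = inner x y + inner x z
  inner_self_nonneg {x} : 0 ≤ inner x x
  inner_self {x} : inner x x = 0 ↔ x = 0
  inner_op_smul_right {a : A} {x y : E} : inner x (y <• a) = inner x y * a
  inner_smul_right_complex {z : ℂ} {x} {y} : inner x (z • y) = z • inner x y
  star_inner x y : star (inner x y) = inner y x
  norm_eq_sqrt_norm_inner_self x : ‖x‖ = √‖inner x x‖

set_option maxHeartbeats 2000000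
set_option synthInstance.maxHeartbeats 400000

open Filter Topology

section Bpart

variable {B : Type*} [CStarAlgebra B] [Nontrivial B] [PartialOrder B] [StarOrderedRing B]

lemma aux_algebraMap_nonneg (r : ℝ) (hr : 0 ≤ r) : 0 ≤ algebraMap ℝ B r := by
  rw [← Real.mul_self_sqrt hr, map_mul]
  have := star_mul_self_nonneg (algebraMap ℝ B (Real.sqrt r))
  rwa [← algebraMap_star_comm, star_trivial] at this

lemma aux_algebraMap_mono {r s : ℝ} (hrs : r ≤ s) :
    algebraMap ℝ B r ≤ algebraMap ℝ B s := by
  rw [← sub_nonneg, ← map_sub]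
  exact aux_algebraMap_nonneg _ (by linarith)



lemma aux_sq_le_norm_smul (P : B) (hP : 0 ≤ P) : P * P ≤ ‖P‖ • P := by
  have h1 : ∀ x ∈ spectrum ℝ P, 0 ≤ x := fun x hx => spectrum_nonneg_of_nonneg hP hx
  calc P * P = cfc (fun s : ℝ => s * s) P := by
        rw [cfc_mul _ _ P, cfc_id' ℝ P]
    _ ≤ cfc (fun s : ℝ => ‖P‖ * s) P := by
        refine cfc_mono fun x hx => ?_
        have := h1 x hx
        have h2 : x ≤ ‖P‖ := (Real.norm_of_nonneg this) ▸ spectrum.norm_le_norm_of_mem hx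
        exact mul_le_mul_of_nonneg_right h2 this
    _ = ‖P‖ • P := by rw [cfc_const_mul_id ..]

lemma aux_cut_norm_sq (P : B) (hP : 0 ≤ P) (x : B) (hx : IsSelfAdjoint x) :
    ‖x * P‖ ^ 2 ≤ ‖P‖ * ‖x * P * x‖ := by
  have h1 : ‖x * P‖ ^ 2 = ‖x * (P * P) * x‖ := by
    rw [sq, ← CStarRing.norm_self_mul_star (x := x * P)]
    congr 1
    rw [star_mul, hx.star_eq, hP.star_eq]
    noncomm_ring
  rw [h1]
  have h2 : x * (P * P) * x ≤ ‖P‖ • (x * P * x) := by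
    have := star_left_conjugate_le_conjugate (aux_sq_le_norm_smul P hP) x
    rw [hx.star_eq] at this
    calc x * (P * P) * x ≤ x * (‖P‖ • P) * x := this
      _ = ‖P‖ • (x * P * x) := by rw [mul_smul_comm, smul_mul_assoc]
  calc ‖x * (P * P) * x‖ ≤ ‖‖P‖ • (x * P * x)‖ := by
        refine CStarAlgebra.norm_le_norm_of_nonneg_of_le ?_ h2
        have : 0 ≤ star x * (P*P) * x := star_left_conjugate_nonneg (by nth_rewrite 1 [← hP.star_eq]; exact star_mul_self_nonneg P) x
        rwa [hx.star_eq] at this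
    _ = ‖P‖ * ‖x * P * x‖ := by
        rw [norm_smul, Real.norm_of_nonneg (norm_nonneg P)]

lemma aux_conj_tendsto (P : B) (hP : 0 ≤ P) (E : ℕ → B) (hE : ∀ n, IsSelfAdjoint (E n))
    (hE1 : ∀ n, ‖E n‖ ≤ 1)
    (hlim : Tendsto (fun n => ‖(1 - E n) * P * (1 - E n)‖) atTop (𝓝 0)) :
    Tendsto (fun n => E n * P * E n) atTop (𝓝 P) := by
  rw [tendsto_iff_norm_sub_tendsto_zero]
  have key : ∀ n, ‖E n * P * E n - P‖ ≤ 2 * Real.sqrt (‖P‖ * ‖(1 - E n) * P * (1 - E n)‖) := by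
    intro n
    set x := 1 - E n with hxdef
    have hx : IsSelfAdjoint x := (IsSelfAdjoint.one B).sub (hE n)
    have hxp : ‖x * P‖ ^ 2 ≤ ‖P‖ * ‖x * P * x‖ := aux_cut_norm_sq P hP x hx
    have hsq : ‖x * P‖ ≤ Real.sqrt (‖P‖ * ‖x * P * x‖) := by
      rw [← Real.sqrt_sq (norm_nonneg (x * P))]
      exact Real.sqrt_le_sqrt hxp
    have hPx : ‖P * x‖ = ‖x * P‖ := by
      rw [← norm_star, star_mul, hx.star_eq, hP.star_eq]
    have hid : E n * P * E n - P = -(x * P) - E n * (P * x) := by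
      rw [hxdef]; noncomm_ring
    calc ‖E n * P * E n - P‖ = ‖-(x * P) - E n * (P * x)‖ := by rw [hid]
      _ ≤ ‖-(x * P)‖ + ‖E n * (P * x)‖ := norm_sub_le _ _
      _ ≤ ‖x * P‖ + ‖E n‖ * ‖P * x‖ := by
          rw [norm_neg]; gcongr; exact norm_mul_le _ _
      _ ≤ ‖x * P‖ + 1 * ‖x * P‖ := by rw [hPx]; gcongr; exact hE1 n
      _ = 2 * ‖x * P‖ := by ring
      _ ≤ 2 * Real.sqrt (‖P‖ * ‖x * P * x‖) := by gcongr
  refine squeeze_zero (fun n => norm_nonneg _) key ?_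
  have : Tendsto (fun n => ‖P‖ * ‖(1 - E n) * P * (1 - E n)‖) atTop (𝓝 (‖P‖ * 0)) :=
    hlim.const_mul _
  rw [mul_zero] at this
  have h2 := (Real.continuous_sqrt.tendsto 0).comp this
  rw [Real.sqrt_zero] at h2
  simpa using h2.const_mul 2

end Bpart

section Key

variable {A : Type*} [NonUnitalCStarAlgebra A] [PartialOrder A] [StarOrderedRing A]

lemma aux_real_smul_nonneg (r : ℝ) (hr : 0 ≤ r) (a : A) (ha : 0 ≤ a) : 0 ≤ r • a := by
  rw [← cfcₙ_const_mul_id r a]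
  exact cfcₙ_nonneg fun x hx => mul_nonneg hr (quasispectrum_nonneg_of_nonneg a ha x hx)


open Unitization in
lemma aux_key_ineq (p q : A) (hp : 0 ≤ p) (hq : 0 ≤ q) (lam₀ μ : ℝ) (hl₀ : 0 ≤ lam₀) (hμ : 0 ≤ μ)
    (hpq : p ≤ lam₀ • q)
    (hn : ∀ a : A, ‖star a * p * a‖ ≤ μ * ‖star a * q * a‖) : p ≤ μ • q := by
  set P : (Unitization ℂ A) := (p : (Unitization ℂ A)) with hPdef
  set Q : (Unitization ℂ A) := (q : (Unitization ℂ A)) with hQdef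
  have hP : (0 : (Unitization ℂ A)) ≤ P := inr_nonneg_iff.mpr hp
  have hQ : (0 : (Unitization ℂ A)) ≤ Q := inr_nonneg_iff.mpr hq
  have hQsa : IsSelfAdjoint Q := .of_nonneg hQ
  have hPQ : P ≤ lam₀ • Q := by
    rw [hPdef, hQdef, ← Unitization.inr_smul, Unitization.inr_le_iff p _ (.of_nonneg hp)
      (.of_nonneg (aux_real_smul_nonneg lam₀ hl₀ q hq))]
    exact hpq
  have hspec : ∀ s ∈ spectrum ℝ Q, 0 ≤ s := fun s hs => spectrum_nonneg_of_nonneg hQ hs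
  -- the approximating sequence
  set ε : ℕ → ℝ := fun k => ((k : ℝ) + 1)⁻¹ with hε
  have hεpos : ∀ k, 0 < ε k := fun k => by positivity
  have hεlim : Tendsto ε atTop (𝓝 0) := by
    simpa [hε, one_div] using (tendsto_one_div_add_atTop_nhds_zero_nat (𝕜 := ℝ))
  set f : ℕ → ℝ → ℝ := fun k s => s / (ε k + s) with hf
  set gE : ℕ → (Unitization ℂ A) := fun k => cfc (f k) Q with hgE
  have hfc : ∀ k, ContinuousOn (f k) (spectrum ℝ Q) := by
    intro k
    apply ContinuousOn.div continuousOn_id (by fun_prop)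
    intro s hs
    have := hspec s hs
    have := hεpos k
    positivity
  have hhc : ∀ k, ContinuousOn (fun s => ε k / (ε k + s)) (spectrum ℝ Q) := by
    intro k
    apply ContinuousOn.div continuousOn_const (by fun_prop)
    intro s hs
    have := hspec s hs; have := hεpos k
    positivity
  have hEsa : ∀ k, IsSelfAdjoint (gE k) := fun k => cfc_predicate (f k) Q
  have hE1 : ∀ k, ‖gE k‖ ≤ 1 := by
    intro k
    refine norm_cfc_le zero_le_one fun s hs => ?_
    have h0 := hspec s hs
    have h1 := hεpos k
    rw [Real.norm_of_nonneg (by positivity), div_le_one (by positivity)]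
    linarith
  have hone_sub : ∀ k, 1 - gE k = cfc (fun s => ε k / (ε k + s)) Q := by
    intro k
    have h : cfc (fun s => ε k / (ε k + s)) Q + gE k = 1 := by
      rw [hgE, ← cfc_add Q _ _ (hhc k) (hfc k)]
      have heq : (spectrum ℝ Q).EqOn (fun s => ε k / (ε k + s) + f k s) (fun _ => (1:ℝ)) := by
        intro s hs
        have h0 := hspec s hs; have h1 := hεpos k
        simp only [hf]
        field_simp
      rw [cfc_congr heq, cfc_const _ _, map_one]
    rw [← h]; abel
  -- convergence of conjugations
  have hconjlim : ∀ (R : (Unitization ℂ A)), 0 ≤ R → ∀ c : ℝ, 0 ≤ c → R ≤ c • Q →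
      Tendsto (fun k => gE k * R * gE k) atTop (𝓝 R) := by
    intro R hR c hc hRQ
    apply aux_conj_tendsto R hR gE hEsa hE1
    have hb : ∀ k, ‖(1 - gE k) * R * (1 - gE k)‖ ≤ c * (ε k / 4) := by
      intro k
      set x := 1 - gE k with hx
      have hxsa : IsSelfAdjoint x := (IsSelfAdjoint.one (Unitization ℂ A)).sub (hEsa k)
      have h1 : x * R * x ≤ c • (x * Q * x) := by
        have h := star_left_conjugate_le_conjugate hRQ x
        rw [hxsa.star_eq] at h
        calc x * R * x ≤ x * (c • Q) * x := h
          _ = c • (x * Q * x) := by rw [mul_smul_comm, smul_mul_assoc]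
      have h2 : ‖x * R * x‖ ≤ c * ‖x * Q * x‖ := by
        have h0 : (0:(Unitization ℂ A)) ≤ x * R * x := by
          have := star_left_conjugate_nonneg hR x; rwa [hxsa.star_eq] at this
        calc ‖x * R * x‖ ≤ ‖c • (x * Q * x)‖ := CStarAlgebra.norm_le_norm_of_nonneg_of_le h0 h1
          _ = c * ‖x * Q * x‖ := by rw [norm_smul, Real.norm_of_nonneg hc]
      have h3 : ‖x * Q * x‖ ≤ ε k / 4 := by
        have hxQx : x * Q * x =
            cfc (fun s => (ε k / (ε k + s)) * s * (ε k / (ε k + s))) Q := by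
          rw [hx, hone_sub k]
          rw [cfc_mul (fun s => (ε k / (ε k + s)) * s) (fun s => ε k / (ε k + s)) Q
              ((hhc k).mul continuousOn_id) (hhc k),
            cfc_mul (fun s => ε k / (ε k + s)) (fun s => s) Q (hhc k) continuousOn_id,
            cfc_id' ℝ Q]
        rw [hxQx]
        refine norm_cfc_le (by positivity) fun s hs => ?_
        have h0 := hspec s hs; have h1 := hεpos k
        have heq : (ε k / (ε k + s)) * s * (ε k / (ε k + s))
            = ε k * s * ε k / ((ε k + s) * (ε k + s)) := by
          field_simp
        rw [Real.norm_of_nonneg (by positivity), heq, div_le_iff₀ (by positivity)]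
        nlinarith [sq_nonneg (ε k - s)]
      calc ‖x * R * x‖ ≤ c * ‖x * Q * x‖ := h2
        _ ≤ c * (ε k / 4) := mul_le_mul_of_nonneg_left h3 hc
    refine squeeze_zero (fun k => norm_nonneg _) hb ?_
    have h4 : Tendsto (fun k => c * (ε k / 4)) atTop (𝓝 (c * (0 / 4))) :=
      Tendsto.const_mul c (hεlim.div_const 4)
    simpa using h4
  -- main inequality for each t > 0
  have hmain : ∀ t : ℝ, 0 < t → P ≤ (μ * t) • 1 + μ • Q := by
    intro t ht
    set g : ℝ → ℝ := fun s => (Real.sqrt (t + s))⁻¹ with hg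
    have hgc : ContinuousOn g (spectrum ℝ Q) := by
      apply ContinuousOn.inv₀ (by fun_prop)
      intro s hs
      have := hspec s hs
      positivity
    set at' : (Unitization ℂ A) := cfc g Q with hat
    have hatsa : IsSelfAdjoint at' := cfc_predicate g Q
    have hck : ∀ k, at' * gE k = cfc (fun s => g s * f k s) Q := fun k =>
      (cfc_mul g (f k) Q hgc (hfc k)).symm
    have hcomm : ∀ k, at' * gE k = gE k * at' := by
      intro k
      rw [hck k, hgE, ← cfc_mul (f k) g Q (hfc k) hgc]
      exact cfc_congr fun s _ => mul_comm _ _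
    have hsak : ∀ k, IsSelfAdjoint (at' * gE k) := by
      intro k
      rw [hck k]
      exact cfc_predicate _ Q
    have hbk : ∀ k, ∃ b : A, (b : (Unitization ℂ A)) = at' * gE k ∧ IsSelfAdjoint b := by
      intro k
      refine ⟨cfcₙ (fun s => g s * f k s) q, ?_, cfcₙ_predicate _ q⟩
      rw [Unitization.real_cfcₙ_eq_cfc_inr q _ (by simp [hf]), hck k, ← hQdef]
    have hnormk : ∀ k, ‖(at' * gE k) * P * (at' * gE k)‖ ≤
        μ * ‖(at' * gE k) * Q * (at' * gE k)‖ := by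
      intro k
      obtain ⟨b, hb, hbsa⟩ := hbk k
      have h1 : ((star b * p * b : A) : (Unitization ℂ A)) = (at' * gE k) * P * (at' * gE k) := by
        rw [hbsa.star_eq, Unitization.inr_mul, Unitization.inr_mul, hb, hPdef]
      have h2 : ((star b * q * b : A) : (Unitization ℂ A)) = (at' * gE k) * Q * (at' * gE k) := by
        rw [hbsa.star_eq, Unitization.inr_mul, Unitization.inr_mul, hb, hQdef]
      calc ‖(at' * gE k) * P * (at' * gE k)‖ = ‖star b * p * b‖ := by
            rw [← h1, Unitization.norm_inr]
        _ ≤ μ * ‖star b * q * b‖ := hn b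
        _ = μ * ‖(at' * gE k) * Q * (at' * gE k)‖ := by
            rw [← h2, Unitization.norm_inr]
    have hshuffle : ∀ (R : (Unitization ℂ A)) k, (at' * gE k) * R * (at' * gE k)
        = at' * (gE k * R * gE k) * at' := by
      intro R k
      nth_rewrite 2 [hcomm k]
      noncomm_ring
    have hPT : Tendsto (fun k => (at' * gE k) * P * (at' * gE k)) atTop
        (𝓝 (at' * P * at')) := by
      have hEP := hconjlim P hP lam₀ hl₀ hPQ
      have hca : Tendsto (fun _ : ℕ => at') atTop (𝓝 at') := tendsto_const_nhds
      have h3 : Tendsto (fun k => at' * (gE k * P * gE k) * at') atTop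
          (𝓝 (at' * P * at')) := (hca.mul hEP).mul hca
      exact h3.congr fun k => (hshuffle P k).symm
    have hQT : Tendsto (fun k => (at' * gE k) * Q * (at' * gE k)) atTop
        (𝓝 (at' * Q * at')) := by
      have hEQ := hconjlim Q hQ 1 zero_le_one (by rw [one_smul])
      have hca : Tendsto (fun _ : ℕ => at') atTop (𝓝 at') := tendsto_const_nhds
      have h3 : Tendsto (fun k => at' * (gE k * Q * gE k) * at') atTop
          (𝓝 (at' * Q * at')) := (hca.mul hEQ).mul hca
      exact h3.congr fun k => (hshuffle Q k).symm
    have hnorm_at : ‖at' * P * at'‖ ≤ μ * ‖at' * Q * at'‖ :=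
      le_of_tendsto_of_tendsto' hPT.norm (hQT.norm.const_mul μ) hnormk
    have hatQ : at' * Q * at' = cfc (fun s => g s * s * g s) Q := by
      rw [cfc_mul (fun s => g s * s) g Q (hgc.mul continuousOn_id) hgc,
          cfc_mul g (fun s => s) Q hgc continuousOn_id, cfc_id' ℝ Q]
    have hatQ1 : ‖at' * Q * at'‖ ≤ 1 := by
      rw [hatQ]
      refine norm_cfc_le zero_le_one fun s hs => ?_
      have h0 := hspec s hs
      have hts : 0 < t + s := by linarith
      have hgg : g s * g s = (t + s)⁻¹ := by
        rw [hg]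
        dsimp only
        rw [← mul_inv, Real.mul_self_sqrt hts.le]
      have heq : g s * s * g s = s / (t + s) := by
        rw [div_eq_mul_inv, ← hgg]; ring
      rw [heq, Real.norm_of_nonneg (by positivity), div_le_one hts]
      linarith
    have h5 : at' * P * at' ≤ algebraMap ℝ (Unitization ℂ A) μ := by
      have hnn : (0:(Unitization ℂ A)) ≤ at' * P * at' := by
        have := star_left_conjugate_nonneg hP at'
        rwa [hatsa.star_eq] at this
      have h6 : at' * P * at' ≤ algebraMap ℝ (Unitization ℂ A) ‖at' * P * at'‖ :=
        IsSelfAdjoint.le_algebraMap_norm_self (.of_nonneg hnn)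
      refine h6.trans (aux_algebraMap_mono ?_)
      calc ‖at' * P * at'‖ ≤ μ * ‖at' * Q * at'‖ := hnorm_at
        _ ≤ μ * 1 := mul_le_mul_of_nonneg_left hatQ1 hμ
        _ = μ := mul_one μ
    set dt : (Unitization ℂ A) := cfc (fun s => Real.sqrt (t + s)) Q with hdt
    have hdtc : ContinuousOn (fun s : ℝ => Real.sqrt (t + s)) (spectrum ℝ Q) := by fun_prop
    have hdtsa : IsSelfAdjoint dt := cfc_predicate _ Q
    have hda : dt * at' = 1 := by
      rw [hdt, hat, ← cfc_mul _ _ Q hdtc hgc]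
      have heq : (spectrum ℝ Q).EqOn (fun s => Real.sqrt (t + s) * g s) (fun _ => (1:ℝ)) := by
        intro s hs
        have h0 := hspec s hs
        have h2 : Real.sqrt (t + s) ≠ 0 := by positivity
        exact mul_inv_cancel₀ h2
      rw [cfc_congr heq, cfc_const _ _, map_one]
    have had : at' * dt = 1 := by
      rw [hdt, hat, ← cfc_mul _ _ Q hgc hdtc]
      have heq : (spectrum ℝ Q).EqOn (fun s => g s * Real.sqrt (t + s)) (fun _ => (1:ℝ)) := by
        intro s hs
        have h0 := hspec s hs
        have h2 : Real.sqrt (t + s) ≠ 0 := by positivity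
        exact inv_mul_cancel₀ h2
      rw [cfc_congr heq, cfc_const _ _, map_one]
    have hP' : P = dt * (at' * P * at') * dt := by
      calc P = (dt * at') * P * (at' * dt) := by rw [hda, had, one_mul, mul_one]
        _ = dt * (at' * P * at') * dt := by simp only [mul_assoc]
    have hconj := star_left_conjugate_le_conjugate h5 dt
    rw [hdtsa.star_eq] at hconj
    have h7 : dt * algebraMap ℝ (Unitization ℂ A) μ * dt = μ • (dt * dt) := by
      rw [Algebra.algebraMap_eq_smul_one, mul_smul_comm, mul_one, smul_mul_assoc]
    have h8 : dt * dt = algebraMap ℝ (Unitization ℂ A) t + Q := by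
      rw [hdt, ← cfc_mul _ _ Q hdtc hdtc]
      have heq : (spectrum ℝ Q).EqOn (fun s => Real.sqrt (t + s) * Real.sqrt (t + s))
          (fun s => t + s) := fun s hs => Real.mul_self_sqrt (by linarith [hspec s hs])
      rw [cfc_congr heq, cfc_const_add t (fun s : ℝ => s) Q continuousOn_id, cfc_id' ℝ Q]
    calc P = dt * (at' * P * at') * dt := hP'
      _ ≤ dt * algebraMap ℝ (Unitization ℂ A) μ * dt := hconj
      _ = μ • (dt * dt) := h7
      _ = (μ * t) • 1 + μ • Q := by
          rw [h8, smul_add, Algebra.algebraMap_eq_smul_one, smul_smul]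
  -- take the limit t → 0
  have hfin : P ≤ μ • Q := by
    rw [← sub_nonneg]
    have htend : Tendsto (fun n : ℕ => (μ * ε n) • (1:(Unitization ℂ A)) + (μ • Q - P)) atTop
        (𝓝 (μ • Q - P)) := by
      have h1 : Tendsto (fun n => μ * ε n) atTop (𝓝 0) := by
        simpa using hεlim.const_mul μ
      have h2 : Tendsto (fun n => (μ * ε n) • (1:(Unitization ℂ A))) atTop (𝓝 ((0:ℝ) • (1:(Unitization ℂ A)))) :=
        h1.smul_const 1
      rw [zero_smul] at h2
      simpa using h2.add_const (μ • Q - P)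
    have hmem : ∀ n : ℕ, (μ * ε n) • (1:(Unitization ℂ A)) + (μ • Q - P) ∈ {x : (Unitization ℂ A) | 0 ≤ x} := by
      intro n
      have h := hmain (ε n) (hεpos n)
      rw [← sub_nonneg] at h
      simp only [Set.mem_setOf_eq]
      convert h using 1
      abel
    exact CStarAlgebra.isClosed_nonneg.mem_of_tendsto htend (.of_forall hmem)
  rw [hPdef, hQdef, ← Unitization.inr_smul, Unitization.inr_le_iff p _ (.of_nonneg hp)
      (.of_nonneg (aux_real_smul_nonneg μ hμ q hq))] at hfin
  exact hfin

end Key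

section Modules

open scoped RightActions

variable {A : Type*} [NonUnitalCStarAlgebra A] [PartialOrder A] [StarOrderedRing A]
variable {E : Type*} [NormedAddCommGroup E] [NormedSpace ℂ E] [SMul Aᵐᵒᵖ E] [CStarModuleRight A E]

namespace CStarModuleRight

lemma inner_zero_right {x : E} : inner A x (0 : E) = 0 := by
  have h := inner_add_right (A := A) (x := x) (y := (0 : E)) (z := 0)
  rw [add_zero] at h
  calc inner A x (0 : E) = inner A x (0 : E) + inner A x (0 : E) - inner A x (0 : E) :=
        (add_sub_cancel_right _ _).symm
    _ = 0 := by rw [← h, sub_self]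

lemma inner_neg_right {x y : E} : inner A x (-y) = -inner A x y := by
  have h := inner_add_right (A := A) (x := x) (y := -y) (z := y)
  rw [neg_add_cancel, inner_zero_right] at h
  exact eq_neg_of_add_eq_zero_left h.symm

lemma inner_sub_right {x y z : E} : inner A x (y - z) = inner A x y - inner A x z := by
  rw [sub_eq_add_neg, inner_add_right, inner_neg_right, ← sub_eq_add_neg]

lemma inner_smul_right_real {r : ℝ} {x y : E} : inner A x (r • y) = r • inner A x y := by
  rw [← Complex.coe_smul, inner_smul_right_complex, Complex.coe_smul]

lemma norm_sq_eq {x : E} : ‖x‖ ^ 2 = ‖inner A x x‖ := by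
  rw [norm_eq_sqrt_norm_inner_self (A := A) x, Real.sq_sqrt (norm_nonneg _)]

lemma inner_op_smul_left {a : A} {x y : E} : inner A (x <• a) y = star a * inner A x y := by
  rw [← star_inner y (x <• a), inner_op_smul_right, star_mul, star_inner]

end CStarModuleRight

lemma aux_cstar_ext {u v : E} (h : ∀ x : E, inner (𝕜 := A) x u = inner A x v) : u = v := by
  have h2 : inner (𝕜 := A) (u - v) (u - v) = 0 := by
    rw [CStarModuleRight.inner_sub_right, h (u - v), sub_self]
  rw [← sub_eq_zero]
  exact CStarModuleRight.inner_self.mp h2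

end Modules

/-- From Remark 2.6:  Let `T ∈ L(E,K)` and `T' ∈ L(H,K)` be adjointable operators between
Hilbert `A`-modules such that `T' (T')* ≤ λ₀ • T T*` for some `λ₀ > 0`.  Then
`inf {λ > 0 : T' (T')* ≤ λ • T T*} = sup {‖(T')* z‖² : z ∈ K, ‖T* z‖ ≤ 1}`. -/
theorem sInf_smul_eq_sSup_norm_sq
    {A : Type*} [NonUnitalCStarAlgebra A] [PartialOrder A] [StarOrderedRing A]
    {E H K : Type*}
    [NormedAddCommGroup E] [NormedSpace ℂ E] [SMul Aᵐᵒᵖ E] [CStarModuleRight A E] [CompleteSpace E]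
    [NormedAddCommGroup H] [NormedSpace ℂ H] [SMul Aᵐᵒᵖ H] [CStarModuleRight A H] [CompleteSpace H]
    [NormedAddCommGroup K] [NormedSpace ℂ K] [SMul Aᵐᵒᵖ K] [CStarModuleRight A K] [CompleteSpace K]
    (T : E → K) (Tadj : K → E)
    (hT : ∀ (x : E) (y : K), inner (𝕜 := A) (T x) y = inner A x (Tadj y))
    (T' : H → K) (T'adj : K → H)
    (hT' : ∀ (x : H) (y : K), inner (𝕜 := A) (T' x) y = inner A x (T'adj y))
    (h : ∃ lam₀ : ℝ, 0 < lam₀ ∧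
        ∀ z : K, inner (𝕜 := A) (T' (T'adj z)) z ≤ lam₀ • inner A (T (Tadj z)) z) :
    sInf {lam : ℝ | 0 < lam ∧
        ∀ z : K, inner (𝕜 := A) (T' (T'adj z)) z ≤ lam • inner A (T (Tadj z)) z} =
      sSup {r : ℝ | ∃ z : K, ‖Tadj z‖ ≤ 1 ∧ r = ‖T'adj z‖ ^ 2} := by
  obtain ⟨lam₀, hlam₀, hlam⟩ := h
  have e1 : ∀ z : K, inner (𝕜 := A) (T' (T'adj z)) z = inner A (T'adj z) (T'adj z) :=
    fun z => hT' (T'adj z) z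
  have e2 : ∀ z : K, inner (𝕜 := A) (T (Tadj z)) z = inner A (Tadj z) (Tadj z) :=
    fun z => hT (Tadj z) z
  simp only [e1, e2] at hlam ⊢
  -- basic adjoint transport facts
  have hadj_smul : ∀ (c : ℝ) (w : K), Tadj (c • w) = c • Tadj w := by
    intro c w
    refine aux_cstar_ext (A := A) fun x => ?_
    rw [← hT, CStarModuleRight.inner_smul_right_real, hT, ← CStarModuleRight.inner_smul_right_real]
  have hadj'_smul : ∀ (c : ℝ) (w : K), T'adj (c • w) = c • T'adj w := by
    intro c w
    refine aux_cstar_ext (A := A) fun x => ?_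
    rw [← hT', CStarModuleRight.inner_smul_right_real, hT', ← CStarModuleRight.inner_smul_right_real]
  have hadj_op : ∀ (a : A) (w : K), Tadj (w <• a) = Tadj w <• a := by
    intro a w
    refine aux_cstar_ext (A := A) fun x => ?_
    rw [← hT, CStarModuleRight.inner_op_smul_right, hT, ← CStarModuleRight.inner_op_smul_right]
  have hadj'_op : ∀ (a : A) (w : K), T'adj (w <• a) = T'adj w <• a := by
    intro a w
    refine aux_cstar_ext (A := A) fun x => ?_
    rw [← hT', CStarModuleRight.inner_op_smul_right, hT', ← CStarModuleRight.inner_op_smul_right]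
  set S := {lam : ℝ | 0 < lam ∧ ∀ z : K,
      inner (𝕜 := A) (T'adj z) (T'adj z) ≤ lam • inner (𝕜 := A) (Tadj z) (Tadj z)} with hSdef
  set R := {r : ℝ | ∃ z : K, ‖Tadj z‖ ≤ 1 ∧ r = ‖T'adj z‖ ^ 2} with hRdef
  have hTadj0 : Tadj (0 : K) = 0 := by
    refine aux_cstar_ext (A := A) fun x => ?_
    rw [← hT, CStarModuleRight.inner_zero_right, CStarModuleRight.inner_zero_right]
  have hT'adj0 : T'adj (0 : K) = 0 := by
    refine aux_cstar_ext (A := A) fun x => ?_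
    rw [← hT', CStarModuleRight.inner_zero_right, CStarModuleRight.inner_zero_right]
  have hR0 : (0 : ℝ) ∈ R := by
    refine ⟨0, ?_, ?_⟩
    · rw [hTadj0, norm_zero]; exact zero_le_one
    · rw [hT'adj0, norm_zero]; simp
  have hRne : R.Nonempty := ⟨0, hR0⟩
  have hcore : ∀ lam ∈ S, ∀ r ∈ R, r ≤ lam := by
    rintro lam ⟨hlpos, hl⟩ r ⟨z, hz1, hz2⟩
    have hin := hl z
    calc r = ‖inner (𝕜 := A) (T'adj z) (T'adj z)‖ := by rw [hz2, CStarModuleRight.norm_sq_eq (A := A)]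
      _ ≤ ‖lam • inner (𝕜 := A) (Tadj z) (Tadj z)‖ :=
          CStarAlgebra.norm_le_norm_of_nonneg_of_le CStarModuleRight.inner_self_nonneg hin
      _ = lam * ‖inner (𝕜 := A) (Tadj z) (Tadj z)‖ := by
          rw [norm_smul, Real.norm_of_nonneg hlpos.le]
      _ = lam * ‖Tadj z‖ ^ 2 := by rw [CStarModuleRight.norm_sq_eq (A := A)]
      _ ≤ lam * 1 := by
          exact mul_le_mul_of_nonneg_left (pow_le_one₀ (norm_nonneg _) hz1) hlpos.le
      _ = lam := mul_one lam
  have hSmem : lam₀ ∈ S := ⟨hlam₀, hlam⟩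
  have hSne : S.Nonempty := ⟨lam₀, hSmem⟩
  have hSbdd : BddBelow S := ⟨0, fun lam hl => hl.1.le⟩
  have hRbdd : BddAbove R := ⟨lam₀, fun r hr => hcore lam₀ hSmem r hr⟩
  set μ := sSup R with hμdef
  have hμ0 : 0 ≤ μ := le_csSup hRbdd hR0
  refine le_antisymm ?_ (le_csInf hSne fun lam hl => csSup_le hRne fun r hr => hcore lam hl r hr)
  -- the hard direction
  have hstar : ∀ w : K, ‖T'adj w‖ ^ 2 ≤ μ * ‖Tadj w‖ ^ 2 := by
    intro w
    by_cases hw : Tadj w = 0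
    · have h0 := hlam w
      rw [hw, CStarModuleRight.inner_zero_right, smul_zero] at h0
      have h1 : inner (𝕜 := A) (T'adj w) (T'adj w) = 0 :=
        le_antisymm h0 CStarModuleRight.inner_self_nonneg
      have h2 : T'adj w = 0 := CStarModuleRight.inner_self.mp h1
      rw [h2, hw, norm_zero]
      simp
    · have hc : 0 < ‖Tadj w‖ := norm_pos_iff.mpr hw
      have hn1 : ‖Tadj ((‖Tadj w‖⁻¹ : ℝ) • w)‖ = 1 := by
        rw [hadj_smul, norm_smul, Real.norm_of_nonneg (by positivity), inv_mul_cancel₀ hc.ne']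
      have hmem : ‖T'adj ((‖Tadj w‖⁻¹ : ℝ) • w)‖ ^ 2 ∈ R := ⟨_, hn1.le, rfl⟩
      have hle := le_csSup hRbdd hmem
      rw [hadj'_smul, norm_smul, Real.norm_of_nonneg (by positivity), mul_pow, inv_pow,
        inv_mul_le_iff₀ (by positivity)] at hle
      calc ‖T'adj w‖ ^ 2 ≤ ‖Tadj w‖ ^ 2 * μ := hle
        _ = μ * ‖Tadj w‖ ^ 2 := mul_comm _ _
  have hop : ∀ z : K, inner (𝕜 := A) (T'adj z) (T'adj z)
      ≤ μ • inner (𝕜 := A) (Tadj z) (Tadj z) := by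
    intro z
    refine aux_key_ineq _ _ CStarModuleRight.inner_self_nonneg CStarModuleRight.inner_self_nonneg
      lam₀ μ hlam₀.le hμ0 (hlam z) fun a => ?_
    have h1 : star a * inner (𝕜 := A) (T'adj z) (T'adj z) * a
        = inner (𝕜 := A) (T'adj (z <• a)) (T'adj (z <• a)) := by
      rw [hadj'_op, CStarModuleRight.inner_op_smul_left, CStarModuleRight.inner_op_smul_right, mul_assoc]
    have h2 : star a * inner (𝕜 := A) (Tadj z) (Tadj z) * a
        = inner (𝕜 := A) (Tadj (z <• a)) (Tadj (z <• a)) := by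
      rw [hadj_op, CStarModuleRight.inner_op_smul_left, CStarModuleRight.inner_op_smul_right, mul_assoc]
    rw [h1, h2, ← CStarModuleRight.norm_sq_eq (A := A), ← CStarModuleRight.norm_sq_eq (A := A)]
    exact hstar (z <• a)
  have hfinal : ∀ ε : ℝ, 0 < ε → sInf S ≤ μ + ε := by
    intro ε hε
    refine csInf_le hSbdd ⟨by linarith, fun z => (hop z).trans ?_⟩
    rw [← sub_nonneg, ← sub_smul, add_sub_cancel_left]
    exact aux_real_smul_nonneg ε hε.le _ CStarModuleRight.inner_self_nonneg
  by_contra hcon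
  push_neg at hcon
  have hε : 0 < (sInf S - μ) / 2 := by linarith
  have := hfinal _ hε
  linarith
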